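/- Let A be a non-unital Banach algebra. Then A is approximately cyclic amenable if and only if its unitization A# is approximately cyclic amenable. -/

import Mathlib

/-!
Let `ι : A → A♯` be the inclusion and `π : A♯ → A` the projection `(λ, a) ↦ a`. Both preserve
commutators (`π` is not multiplicative, but `π (xy) - π (yx) = π x π y - π y π x`), and that is
all precomposition with them needs to carry approximately inner derivations into the dual to
approximately inner ones. A cyclic derivation `D` of `A♯` vanishes on the unit in either
argument, so it is the pullback along `π` of its restriction to `A`, which is a cyclic
derivation of `A` because `ι` is multiplicative. Conversely, the pullback along `π` of a cyclic
derivation `d` of `A` is a derivation, cyclicity of `d` absorbing the scalar parts, and its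
restriction to `A` is `d`.
-/

open ContinuousLinearMap Filter Topology

open ContinuousLinearMap Filter Topology

/-- A Banach `A`-bimodule: a complete normed `ℂ`-space with commuting continuous
left and right `A`-actions, jointly bounded and bilinear. -/
structure BBimod (A : Type) [NonUnitalNormedRing A] [NormedSpace ℂ A] where
  carrier : Type
  [grp : NormedAddCommGroup carrier]
  [mod : NormedSpace ℂ carrier]
  [complete : CompleteSpace carrier]
  lsmul : A → carrier →L[ℂ] carrier
  rsmul : A → carrier →L[ℂ] carrier
  lsmul_add : ∀ a b, lsmul (a + b) = lsmul a + lsmul b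
  rsmul_add : ∀ a b, rsmul (a + b) = rsmul a + rsmul b
  lsmul_smul : ∀ (c : ℂ) (a), lsmul (c • a) = c • lsmul a
  rsmul_smul : ∀ (c : ℂ) (a), rsmul (c • a) = c • rsmul a
  lsmul_mul : ∀ a b, lsmul (a * b) = (lsmul a).comp (lsmul b)
  rsmul_mul : ∀ a b, rsmul (a * b) = (rsmul b).comp (rsmul a)
  lsmul_rsmul : ∀ a b, (lsmul a).comp (rsmul b) = (rsmul b).comp (lsmul a)
  bound : ∃ C : ℝ, ∀ a, ‖lsmul a‖ ≤ C * ‖a‖ ∧ ‖rsmul a‖ ≤ C * ‖a‖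

attribute [instance] BBimod.grp BBimod.mod BBimod.complete

variable {A : Type} [NonUnitalNormedRing A] [NormedSpace ℂ A]

/-- The dual of a Banach bimodule, with the canonical dual actions
`⟨u, Λ·a⟩ = ⟨a·u, Λ⟩` and `⟨u, a·Λ⟩ = ⟨u·a, Λ⟩`. -/
noncomputable def BBimod.dual (M : BBimod A) : BBimod A where
  carrier := M.carrier →L[ℂ] ℂ
  lsmul a := (compL ℂ M.carrier M.carrier ℂ).flip (M.rsmul a)
  rsmul a := (compL ℂ M.carrier M.carrier ℂ).flip (M.lsmul a)
  lsmul_add a b := by ext Λ x; simp [M.rsmul_add]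
  rsmul_add a b := by ext Λ x; simp [M.lsmul_add]
  lsmul_smul c a := by ext Λ x; simp [M.rsmul_smul]
  rsmul_smul c a := by ext Λ x; simp [M.lsmul_smul]
  lsmul_mul a b := by ext Λ x; simp [M.rsmul_mul]
  rsmul_mul a b := by ext Λ x; simp [M.lsmul_mul]
  lsmul_rsmul a b := by
    ext Λ x
    have h : M.lsmul b (M.rsmul a x) = M.rsmul a (M.lsmul b x) := by
      have := congrArg (fun T : M.carrier →L[ℂ] M.carrier => T x) (M.lsmul_rsmul b a)
      simpa using this
    simp [h]
  bound := by
    obtain ⟨C, hC⟩ := M.bound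
    refine ⟨C, fun a => ⟨?_, ?_⟩⟩
    · refine opNorm_le_bound _ ?_ fun Λ => ?_
      · exact le_trans (norm_nonneg _) (hC a).2
      · calc ‖Λ.comp (M.rsmul a)‖ ≤ ‖Λ‖ * ‖M.rsmul a‖ := opNorm_comp_le _ _
          _ ≤ (C * ‖a‖) * ‖Λ‖ := by
              rw [mul_comm]
              exact mul_le_mul_of_nonneg_right (hC a).2 (norm_nonneg _)
    · refine opNorm_le_bound _ ?_ fun Λ => ?_
      · exact le_trans (norm_nonneg _) (hC a).1
      · calc ‖Λ.comp (M.lsmul a)‖ ≤ ‖Λ‖ * ‖M.lsmul a‖ := opNorm_comp_le _ _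
          _ ≤ (C * ‖a‖) * ‖Λ‖ := by
              rw [mul_comm]
              exact mul_le_mul_of_nonneg_right (hC a).1 (norm_nonneg _)

variable (A) [IsScalarTower ℂ A A] [SMulCommClass ℂ A A] [CompleteSpace A]

/-- `A` as a Banach bimodule over itself. -/
noncomputable def BBimod.base : BBimod A where
  carrier := A
  lsmul a := ContinuousLinearMap.mul ℂ A a
  rsmul a := (ContinuousLinearMap.mul ℂ A).flip a
  lsmul_add a b := by ext x; simp [add_mul]
  rsmul_add a b := by ext x; simp [mul_add]
  lsmul_smul c a := by ext x; simp [smul_mul_assoc]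
  rsmul_smul c a := by ext x; simp [mul_smul_comm]
  lsmul_mul a b := by ext x; simp [mul_assoc]
  rsmul_mul a b := by ext x; simp [mul_assoc]
  lsmul_rsmul a b := by ext x; simp [mul_assoc]
  bound := by
    refine ⟨1, fun a => ⟨?_, ?_⟩⟩
    · simpa using ContinuousLinearMap.opNorm_mul_apply_le ℂ A a
    · refine le_trans (opNorm_le_bound _ (norm_nonneg a) fun x => ?_) (by simp)
      simpa [mul_comm] using norm_mul_le x a


/-- The `n`-th dual `A^(n)` of `A` as a Banach `A`-bimodule. -/
noncomputable def iterDual : ℕ → BBimod A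
  | 0 => BBimod.base A
  | n + 1 => (iterDual n).dual

variable {A}

/-- `D` is a derivation from `A` into the Banach bimodule `M`. -/
def IsDerivation (M : BBimod A) (D : A →L[ℂ] M.carrier) : Prop :=
  ∀ a b : A, D (a * b) = M.lsmul a (D b) + M.rsmul b (D a)

/-- `D` is an inner derivation. -/
def IsInner (M : BBimod A) (D : A →L[ℂ] M.carrier) : Prop :=
  ∃ x : M.carrier, ∀ a : A, D a = M.lsmul a x - M.rsmul a x

/-- `D` is approximately inner: there is a net `(x_i)` in `M` with
`D a = lim_i (a·x_i − x_i·a)` for every `a`. -/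
def IsApproxInner (M : BBimod A) (D : A →L[ℂ] M.carrier) : Prop :=
  ∃ (ι : Type) (l : Filter ι) (x : ι → M.carrier), l.NeBot ∧
    ∀ a : A, Tendsto (fun i => M.lsmul a (x i) - M.rsmul a (x i)) l (𝓝 (D a))

variable (A)

/-- `A` is weakly amenable. -/
def WeaklyAmenable : Prop :=
  ∀ D : A →L[ℂ] (iterDual A 1).carrier, IsDerivation (iterDual A 1) D → IsInner (iterDual A 1) D

/-- `A` is approximately `n`-weakly amenable. -/
def ApproxNWeaklyAmenable (n : ℕ) : Prop :=
  ∀ D : A →L[ℂ] (iterDual A n).carrier,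
    IsDerivation (iterDual A n) D → IsApproxInner (iterDual A n) D

/-- `A` is `n`-weakly amenable. -/
def NWeaklyAmenable (n : ℕ) : Prop :=
  ∀ D : A →L[ℂ] (iterDual A n).carrier,
    IsDerivation (iterDual A n) D → IsInner (iterDual A n) D

/-- `A` is approximately weakly amenable. -/
def ApproxWeaklyAmenable : Prop := ApproxNWeaklyAmenable A 1

/-- `A` is approximately amenable: every continuous derivation into the dual of a
Banach `A`-bimodule is approximately inner. -/
def ApproxAmenable : Prop :=
  ∀ (X : BBimod A) (D : A →L[ℂ] X.dual.carrier), IsDerivation X.dual D → IsApproxInner X.dual D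

section Concrete
variable (A : Type) [NonUnitalNormedRing A] [NormedSpace ℂ A]
  [IsScalarTower ℂ A A] [SMulCommClass ℂ A A]

/-- The left action of `A` on its dual `A*`: `(a·f)(b) = f (b * a)`. -/
noncomputable def lact (a : A) (f : A →L[ℂ] ℂ) : A →L[ℂ] ℂ :=
  f.comp ((ContinuousLinearMap.mul ℂ A).flip a)

/-- The right action of `A` on its dual `A*`: `(f·a)(b) = f (a * b)`. -/
noncomputable def ract (a : A) (f : A →L[ℂ] ℂ) : A →L[ℂ] ℂ :=
  f.comp (ContinuousLinearMap.mul ℂ A a)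

variable [CompleteSpace A]

/-- `A` is approximately cyclic amenable: every continuous cyclic derivation
`D : A → A*` is approximately inner. -/
def ApproxCyclicAmenable : Prop :=
  ∀ D : A →L[ℂ] (A →L[ℂ] ℂ),
    (∀ a b : A, D (a * b) = lact A a (D b) + ract A b (D a)) →
    (∀ a b : A, D a b + D b a = 0) →
    ∃ (ι : Type) (l : Filter ι) (x : ι → (A →L[ℂ] ℂ)), l.NeBot ∧
      ∀ a : A, Tendsto (fun i => lact A a (x i) - ract A a (x i)) l (𝓝 (D a))

/-- `A` has a bounded (two-sided) approximate identity. -/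
def HasBAI : Prop :=
  ∃ (ι : Type) (l : Filter ι) (e : ι → A) (C : ℝ), l.NeBot ∧ (∀ i, ‖e i‖ ≤ C) ∧
    ∀ a : A, Tendsto (fun i => e i * a) l (𝓝 a) ∧ Tendsto (fun i => a * e i) l (𝓝 a)

end Concrete

section CyclicDerivation

variable {A B : Type} [NonUnitalNormedRing A] [NormedSpace ℂ A] [NonUnitalNormedRing B]
  [NormedSpace ℂ B]

noncomputable def pullbackDual (φ : B →L[ℂ] A) (D : A →L[ℂ] (A →L[ℂ] ℂ)) :
    B →L[ℂ] (B →L[ℂ] ℂ) :=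
  (precomp ℂ φ).comp (D.comp φ)

@[simp]
theorem pullbackDual_apply (φ : B →L[ℂ] A) (D : A →L[ℂ] (A →L[ℂ] ℂ)) (x y : B) :
    pullbackDual φ D x y = D (φ x) (φ y) := rfl

variable [IsScalarTower ℂ A A] [SMulCommClass ℂ A A] [IsScalarTower ℂ B B] [SMulCommClass ℂ B B]

variable (A) in
def IsCyclicDerivation (D : A →L[ℂ] (A →L[ℂ] ℂ)) : Prop :=
  (∀ a b : A, D (a * b) = lact A a (D b) + ract A b (D a)) ∧ ∀ a b : A, D a b + D b a = 0

def IsApproxInnerDual (D : A →L[ℂ] (A →L[ℂ] ℂ)) : Prop :=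
  ∃ (ι : Type) (l : Filter ι) (x : ι → (A →L[ℂ] ℂ)), l.NeBot ∧
    ∀ a : A, Tendsto (fun i => lact A a (x i) - ract A a (x i)) l (𝓝 (D a))

theorem approxCyclicAmenable_iff [CompleteSpace A] :
    ApproxCyclicAmenable A ↔ ∀ D, IsCyclicDerivation A D → IsApproxInnerDual D :=
  ⟨fun h D hD => h D hD.1 hD.2, fun h D hder hcyc => h D ⟨hder, hcyc⟩⟩

@[simp]
theorem lact_apply (a : A) (f : A →L[ℂ] ℂ) (b : A) : lact A a f b = f (b * a) := rfl

@[simp]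
theorem ract_apply (a : A) (f : A →L[ℂ] ℂ) (b : A) : ract A a f b = f (a * b) := rfl

theorem precomp_lact_sub_ract (φ : B →L[ℂ] A)
    (hφ : ∀ x y, φ (x * y) - φ (y * x) = φ x * φ y - φ y * φ x) (x : B) (f : A →L[ℂ] ℂ) :
    precomp ℂ φ (lact A (φ x) f - ract A (φ x) f) =
      lact B x (precomp ℂ φ f) - ract B x (precomp ℂ φ f) := by
  ext y
  simp only [precomp_apply, sub_apply, comp_apply, lact_apply, ract_apply, ← map_sub, hφ]

theorem IsApproxInnerDual.pullbackDual {D : A →L[ℂ] (A →L[ℂ] ℂ)} (hD : IsApproxInnerDual D)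
    (φ : B →L[ℂ] A) (hφ : ∀ x y, φ (x * y) - φ (y * x) = φ x * φ y - φ y * φ x) :
    IsApproxInnerDual (pullbackDual φ D) := by
  obtain ⟨ι, l, f, hl, hf⟩ := hD
  refine ⟨ι, l, fun i => precomp ℂ φ (f i), hl, fun x => ?_⟩
  have := ((precomp ℂ φ).continuous.tendsto _).comp (hf (φ x))
  simp only [Function.comp_def, precomp_lact_sub_ract φ hφ] at this
  exact this

theorem IsCyclicDerivation.pullbackDual_of_map_mul {D : A →L[ℂ] (A →L[ℂ] ℂ)}
    (hD : IsCyclicDerivation A D) {φ : B →L[ℂ] A} (hφ : ∀ x y, φ (x * y) = φ x * φ y) :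
    IsCyclicDerivation B (pullbackDual φ D) := by
  refine ⟨fun x y => ?_, fun x y => hD.2 (φ x) (φ y)⟩
  ext z
  simpa [hφ] using congr($(hD.1 (φ x) (φ y)) (φ z))

end CyclicDerivation

section UnitalCyclicDerivation

variable {B : Type} [NormedRing B] [NormedAlgebra ℂ B] {D : B →L[ℂ] (B →L[ℂ] ℂ)}

theorem IsCyclicDerivation.map_one (hD : IsCyclicDerivation B D) : D 1 = 0 := by
  have h := hD.1 1 1
  have hl : lact B 1 (D 1) = D 1 := by ext; simp
  have hr : ract B 1 (D 1) = D 1 := by ext; simp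
  rw [mul_one, hl, hr] at h
  exact left_eq_add.mp h

theorem IsCyclicDerivation.apply_one (hD : IsCyclicDerivation B D) (x : B) : D x 1 = 0 := by
  simpa [hD.map_one] using hD.2 x 1

end UnitalCyclicDerivation

section Unitization

open WithLp

variable {A : Type} [NonUnitalNormedRing A] [NormedSpace ℂ A]

noncomputable def unitizationInr : A →L[ℂ] WithLp 1 (Unitization ℂ A) :=
  LinearMap.mkContinuous
    ((WithLp.linearEquiv 1 ℂ (Unitization ℂ A)).symm.toLinearMap.comp
      (Unitization.inrHom ℂ ℂ A)) 1
    fun a => by rw [one_mul]; exact (unitization_norm_inr a).le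

noncomputable def unitizationSnd : WithLp 1 (Unitization ℂ A) →L[ℂ] A :=
  LinearMap.mkContinuous
    ((Unitization.sndHom ℂ ℂ A).comp (WithLp.linearEquiv 1 ℂ (Unitization ℂ A)).toLinearMap) 1
    fun x => by rw [one_mul, unitization_norm_def]; exact le_add_of_nonneg_left (norm_nonneg _)

@[simp]
theorem ofLp_unitizationInr (a : A) : ofLp (unitizationInr a) = (a : Unitization ℂ A) := rfl

@[simp]
theorem unitizationSnd_apply (x : WithLp 1 (Unitization ℂ A)) :
    unitizationSnd x = (ofLp x).snd := rfl

variable [IsScalarTower ℂ A A] [SMulCommClass ℂ A A]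

@[simp]
theorem WithLp.unitization_one : ofLp (1 : WithLp 1 (Unitization ℂ A)) = 1 := rfl

theorem eq_fst_smul_one_add_unitizationInr (x : WithLp 1 (Unitization ℂ A)) :
    x = (ofLp x).fst • 1 + unitizationInr (unitizationSnd x) :=
  (WithLp.equiv 1 _).injective <| Unitization.ext (by simp) (by simp)

theorem unitizationInr_mul (a b : A) :
    unitizationInr (a * b) = unitizationInr a * unitizationInr b :=
  (WithLp.equiv 1 _).injective (Unitization.inr_mul ℂ a b)

theorem unitizationSnd_mul (x y : WithLp 1 (Unitization ℂ A)) :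
    unitizationSnd (x * y) =
      (ofLp x).fst • unitizationSnd y + (ofLp y).fst • unitizationSnd x +
        unitizationSnd x * unitizationSnd y := by
  simp

theorem unitizationInr_commutator (a b : A) :
    unitizationInr (a * b) - unitizationInr (b * a) =
      unitizationInr a * unitizationInr b - unitizationInr b * unitizationInr a := by
  rw [unitizationInr_mul, unitizationInr_mul]

theorem unitizationSnd_commutator (x y : WithLp 1 (Unitization ℂ A)) :
    unitizationSnd (x * y) - unitizationSnd (y * x) =
      unitizationSnd x * unitizationSnd y - unitizationSnd y * unitizationSnd x := by
  rw [unitizationSnd_mul, unitizationSnd_mul]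
  abel

theorem IsCyclicDerivation.eq_pullbackDual_unitizationSnd
    {D : WithLp 1 (Unitization ℂ A) →L[ℂ] (WithLp 1 (Unitization ℂ A) →L[ℂ] ℂ)}
    (hD : IsCyclicDerivation (WithLp 1 (Unitization ℂ A)) D) :
    D = pullbackDual unitizationSnd (pullbackDual unitizationInr D) := by
  ext x y
  rw [pullbackDual_apply, pullbackDual_apply]
  conv_lhs => rw [eq_fst_smul_one_add_unitizationInr x, eq_fst_smul_one_add_unitizationInr y]
  simp [hD.map_one, hD.apply_one]

theorem pullbackDual_unitizationInr_pullbackDual_unitizationSnd (d : A →L[ℂ] (A →L[ℂ] ℂ)) :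
    pullbackDual unitizationInr (pullbackDual unitizationSnd d) = d := rfl

theorem IsCyclicDerivation.pullbackDual_unitizationSnd {d : A →L[ℂ] (A →L[ℂ] ℂ)}
    (hd : IsCyclicDerivation A d) :
    IsCyclicDerivation (WithLp 1 (Unitization ℂ A)) (pullbackDual unitizationSnd d) := by
  refine ⟨fun x y => ?_, fun x y => hd.2 _ _⟩
  ext z
  have h := congr($(hd.1 (unitizationSnd x) (unitizationSnd y)) (unitizationSnd z))
  simp only [pullbackDual_apply, add_apply, lact_apply, ract_apply, unitizationSnd_mul, map_add,
    map_smul, smul_apply, smul_eq_mul] at h ⊢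
  -- the two sides differ by `(ofLp z).fst • (d (π x) (π y) + d (π y) (π x))`
  linear_combination h - (ofLp z).fst * hd.2 (unitizationSnd x) (unitizationSnd y)

end Unitization

variable (A : Type) [NonUnitalNormedRing A] [NormedSpace ℂ A]
  [IsScalarTower ℂ A A] [SMulCommClass ℂ A A] [CompleteSpace A]

theorem approxCyclicAmenable_iff_unitization :
    ApproxCyclicAmenable A ↔ ApproxCyclicAmenable (WithLp 1 (Unitization ℂ A)) := by
  rw [approxCyclicAmenable_iff, approxCyclicAmenable_iff]
  refine ⟨fun hA D hD => ?_, fun hA d hd => ?_⟩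
  · rw [hD.eq_pullbackDual_unitizationSnd]
    exact (hA _ (hD.pullbackDual_of_map_mul unitizationInr_mul)).pullbackDual _
      unitizationSnd_commutator
  · rw [← pullbackDual_unitizationInr_pullbackDual_unitizationSnd d]
    exact (hA _ hd.pullbackDual_unitizationSnd).pullbackDual _ unitizationInr_commutator
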